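/- Fix integers k ≥ 2, n ≥ 2, and 0 ≤ ε ≤ k−1, and fix 0 ≤ j ≤ k−1. For each word w of length k−1 in the alphabet {E, N}, let V_w be the set of (γ₁, γ₂) ∈ 𝒫^{k,ε}_{n,1} such that γ₁ terminates with the steps w and γ₂ terminates with E N^{k−2}. Then the sum of |V_w| over all words w of length k−1 containing exactly j instances of E equals (C(k−1, j) − C(ε, j)) · |𝒫^{k,ε}_{n−1,j}|, where C(ε, j) = 0 for j > ε. -/

import Mathlib

/-- A step of a lattice path: `E = (1,0)` or `N = (0,1)`. -/
inductive Step : Type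
  | E | N
deriving DecidableEq, Repr

instance instFintypeStep : Fintype Step :=
  ⟨{Step.E, Step.N}, fun x => by cases x <;> simp⟩

/-- The terminal point of a lattice path starting at `(0,0)`. -/
def endpoint (γ : List Step) : ℤ × ℤ :=
  ((γ.count Step.E : ℤ), (γ.count Step.N : ℤ))

/-- The set of lattice points visited by a lattice path starting at `(0,0)`. -/
def vertices (γ : List Step) : Set (ℤ × ℤ) :=
  {p | ∃ i ≤ γ.length, endpoint (γ.take i) = p}

/-- The bottom-path condition: `γ = E N^{b₁} E N^{b₂} ⋯ E N^{b_m}` where every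
`bᵢ ≡ k - 2 (mod k - 1)`. -/
def kGoodBottom (k : ℕ) (γ : List Step) : Prop :=
  ∃ bs : List ℕ, (∀ b ∈ bs, b % (k - 1) = (k - 2) % (k - 1)) ∧
    γ = (bs.map fun b => Step.E :: List.replicate b Step.N).flatten

/-- `γ₁` stays weakly above `γ₂`: no visited point of `γ₂` lies strictly above a
visited point of `γ₁` with the same `x`-coordinate. -/
def weaklyAbove (γ₁ γ₂ : List Step) : Prop :=
  ∀ p ∈ vertices γ₁, ∀ q ∈ vertices γ₂, p.1 = q.1 → q.2 ≤ p.2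

/-- The set `𝒫^{k,ε}_{n,δ}` of `k`-path pairs of length `((k-1)n - ε, (k-1)n)`
and distance `δ`. -/
def PathPairs (k n ε δ : ℕ) : Set (List Step × List Step) :=
  {p | p.1.length = (k - 1) * n - ε ∧ p.1.head? = some Step.N ∧
       p.2.length = (k - 1) * n ∧ p.2.head? = some Step.E ∧
       (∀ q ∈ vertices p.1 ∩ vertices p.2, q = ((0 : ℤ), (0 : ℤ))) ∧
       (endpoint p.2).1 - (endpoint p.1).1 = (δ : ℤ) ∧
       kGoodBottom k p.2}

/-- The set `𝒫̃^{k,ε}_{n,δ,m}` of weak `k`-path pairs of distance `δ` with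
exactly `m` returns (intersections away from the origin). -/
def WeakPathPairs (k n ε δ m : ℕ) : Set (List Step × List Step) :=
  {p | p.1.length = (k - 1) * n - ε ∧ p.1.head? = some Step.N ∧
       p.2.length = (k - 1) * n ∧ p.2.head? = some Step.E ∧
       weaklyAbove p.1 p.2 ∧
       (endpoint p.2).1 - (endpoint p.1).1 = (δ : ℤ) ∧
       kGoodBottom k p.2 ∧
       ((vertices p.1 ∩ vertices p.2) \ {((0 : ℤ), (0 : ℤ))}).ncard = m}

/-- The generating function `C_k(t) = ∑_{n≥0} (1/(kn+1)) C(kn+1, n) tⁿ` of the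
`k`-Catalan (Fuss–Catalan) numbers, as a formal power series over `ℚ`. -/
def fussCatalanGF (k : ℕ) : PowerSeries ℚ :=
  PowerSeries.mk fun n => (((k * n + 1 : ℕ) : ℚ))⁻¹ * ((k * n + 1).choose n : ℚ)

/-!
Two lattice paths are at the same point after `s` and `t` steps only if `s = t`, and then exactly
when their first `s` steps contain equally many `E`s; so whether the paths of a pair meet is read
off their running `E`-counts.

If some `E` of `w` lies beyond its first `ε` letters, cutting `w` off `γ₁` and `E N^{k-2}` off `γ₂`
is a bijection from `V_w` onto `𝒫^{k,ε}_{n-1,j}`. Its inverse keeps the paths apart: write `σ₁, σ₂`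
for the cut paths, so `|σ₂| = |σ₁| + ε`. While `γ₁` reads the first `ε` letters of `w`, `γ₂` runs
through the last `ε ≤ k - 2` steps of `σ₂`, which contain no `E` because every `E` of a bottom path
is followed by at least `k - 2` `N`s. So `γ₂` is already at its final `x`-coordinate
`x(σ₁) + j`, which `γ₁` reaches only at the last `E` of `w`, beyond position `ε`; by then `γ₂` has
taken the `E` of `E N^{k-2}`. If instead all `E`s of `w` lie among its first `ε` letters, the two
paths of any pair in `V_w` are at the same point after `(k - 1)(n - 1)` steps, so `V_w` is empty.
Finally, `C(ε, j)` of the `C(k - 1, j)` words with `j` letters `E` are of this second kind.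
-/

theorem List.count_take_add_count_drop {α : Type*} [BEq α] (l : List α) (i : ℕ) (a : α) :
    (l.take i).count a + (l.drop i).count a = l.count a := by
  rw [← List.count_append, List.take_append_drop]

theorem List.append_cons_replicate_inj {α : Type*} {a b : α} (hab : a ≠ b) {l₁ l₂ : List α}
    {m n : ℕ} (h : l₁ ++ a :: List.replicate m b = l₂ ++ a :: List.replicate n b) :
    l₁ = l₂ ∧ m = n := by
  suffices key : ∀ (m n : ℕ) (r₁ r₂ : List α),
      List.replicate m b ++ a :: r₁ = List.replicate n b ++ a :: r₂ → r₁ = r₂ ∧ m = n by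
    simpa using key m n l₁.reverse l₂.reverse (by simpa using congrArg List.reverse h)
  intro m
  induction m with
  | zero => rintro (_ | n) r₁ r₂ h <;> simp_all [List.replicate_succ]
  | succ m ih =>
    rintro (_ | n) r₁ r₂ h
    · simp_all [List.replicate_succ, eq_comm]
    · simpa using ih n r₁ r₂ (by simpa [List.replicate_succ] using h)

theorem count_E_add_count_N (γ : List Step) : γ.count Step.E + γ.count Step.N = γ.length := by
  induction γ with
  | nil => rfl
  | cons s γ ih => cases s <;> simp <;> omega

theorem endpoint_take_fst_add_snd {γ : List Step} {i : ℕ} (hi : i ≤ γ.length) :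
    (endpoint (γ.take i)).1 + (endpoint (γ.take i)).2 = i := by
  have h := count_E_add_count_N (γ.take i)
  rw [List.length_take_of_le hi] at h
  simp only [endpoint]
  exact_mod_cast h

theorem vertices_meet_only_at_origin_iff {γ₁ γ₂ : List Step} :
    (∀ q ∈ vertices γ₁ ∩ vertices γ₂, q = ((0 : ℤ), (0 : ℤ))) ↔
      ∀ i, 0 < i → i ≤ γ₁.length → i ≤ γ₂.length →
        (γ₁.take i).count Step.E ≠ (γ₂.take i).count Step.E := by
  constructor
  · intro h i hi h₁ h₂ hE
    have hN : (γ₁.take i).count Step.N = (γ₂.take i).count Step.N := by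
      have e₁ := count_E_add_count_N (γ₁.take i)
      have e₂ := count_E_add_count_N (γ₂.take i)
      rw [List.length_take_of_le h₁] at e₁
      rw [List.length_take_of_le h₂] at e₂
      omega
    have h0 := h (endpoint (γ₁.take i))
      ⟨⟨i, h₁, rfl⟩, ⟨i, h₂, by simp only [endpoint, hE, hN]⟩⟩
    have := endpoint_take_fst_add_snd h₁
    rw [h0] at this
    omega
  · rintro h q ⟨⟨s, hs, rfl⟩, ⟨t, ht, hst⟩⟩
    obtain rfl : t = s := by
      have := endpoint_take_fst_add_snd ht
      rw [hst, endpoint_take_fst_add_snd hs] at this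
      omega
    rcases Nat.eq_zero_or_pos t with rfl | ht0
    · rfl
    · exact absurd (by simpa [endpoint] using (congrArg Prod.fst hst).symm) (h t ht0 hs ht)

theorem vertices_subset_of_prefix {γ γ' : List Step} (h : γ <+: γ') :
    vertices γ ⊆ vertices γ' := by
  obtain ⟨δ, rfl⟩ := h
  rintro _ ⟨i, hi, rfl⟩
  exact ⟨i, by rw [List.length_append]; omega, by rw [List.take_append_of_le_length hi]⟩

def bottomBlock (k : ℕ) : List Step :=
  Step.E :: List.replicate (k - 2) Step.N

theorem length_bottomBlock {k : ℕ} (hk : 2 ≤ k) : (bottomBlock k).length = k - 1 := by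
  simp only [bottomBlock, List.length_cons, List.length_replicate]
  omega

theorem count_E_bottomBlock (k : ℕ) : (bottomBlock k).count Step.E = 1 := by
  simp [bottomBlock, List.count_replicate]

theorem sub_two_le_of_mod_eq {k b : ℕ} (hb : b % (k - 1) = (k - 2) % (k - 1)) : k - 2 ≤ b := by
  rcases Nat.lt_or_ge k 2 with hk | hk
  · omega
  · have := Nat.mod_le b (k - 1)
    rw [Nat.mod_eq_of_lt (by omega : k - 2 < k - 1)] at hb
    omega

theorem kGoodBottom.mul_count_E_drop_le {k : ℕ} {γ : List Step} (hγ : kGoodBottom k γ)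
    (i : ℕ) : (k - 2) * (γ.drop i).count Step.E ≤ (γ.drop i).count Step.N := by
  obtain ⟨bs, hbs, rfl⟩ := hγ
  induction bs generalizing i with
  | nil => simp
  | cons b bs ih =>
    have hb := sub_two_le_of_mod_eq (hbs b List.mem_cons_self)
    have hblock : (k - 2) * ((Step.E :: List.replicate b Step.N).drop i).count Step.E ≤
        ((Step.E :: List.replicate b Step.N).drop i).count Step.N := by
      cases i <;> simp [List.count_replicate, List.drop_replicate, hb]
    simp only [List.map_cons, List.flatten_cons, List.drop_append, List.count_append, mul_add]
    exact add_le_add hblock (ih _ fun b hb => hbs b (List.mem_cons_of_mem _ hb))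

theorem kGoodBottom.count_E_drop_eq_zero {k : ℕ} {γ : List Step} (hγ : kGoodBottom k γ)
    {i : ℕ} (hi : γ.length < i + (k - 1)) : (γ.drop i).count Step.E = 0 := by
  have hlen := count_E_add_count_N (γ.drop i)
  have hle := hγ.mul_count_E_drop_le i
  rw [List.length_drop] at hlen
  by_contra h
  have := Nat.le_mul_of_pos_right (k - 2) (Nat.pos_of_ne_zero h)
  omega

theorem kGoodBottom_append_bottomBlock_iff {k : ℕ} {γ : List Step} :
    kGoodBottom k (γ ++ bottomBlock k) ↔ kGoodBottom k γ := by
  constructor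
  · rintro ⟨bs, hbs, h⟩
    rcases List.eq_nil_or_concat' bs with rfl | ⟨bs, b, rfl⟩
    · simp [bottomBlock] at h
    · simp only [List.map_append, List.map_singleton, List.flatten_append,
        List.flatten_singleton, bottomBlock] at h
      obtain ⟨rfl, -⟩ := List.append_cons_replicate_inj (by decide) h
      exact ⟨bs, fun b hb => hbs b (List.mem_append_left _ hb), rfl⟩
  · rintro ⟨bs, hbs, rfl⟩
    refine ⟨bs ++ [k - 2], fun b hb => ?_, by simp [bottomBlock]⟩
    rcases List.mem_append.1 hb with hb | hb
    · exact hbs b hb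
    · rw [List.mem_singleton.1 hb]

theorem vertices_meet_only_at_origin_append {k ε : ℕ} {σ₁ σ₂ w : List Step}
    (hσ : ∀ q ∈ vertices σ₁ ∩ vertices σ₂, q = ((0 : ℤ), (0 : ℤ)))
    (hgood : kGoodBottom k σ₂) (hlen : σ₁.length + ε = σ₂.length) (hε : ε ≤ k - 1)
    (hE : σ₂.count Step.E = σ₁.count Step.E + w.count Step.E) (hw : Step.E ∈ w.drop ε) :
    ∀ q ∈ vertices (σ₁ ++ w) ∩ vertices (σ₂ ++ bottomBlock k), q = ((0 : ℤ), (0 : ℤ)) := by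
  rw [vertices_meet_only_at_origin_iff] at hσ ⊢
  have hwε : (w.take ε).count Step.E < w.count Step.E := by
    have := w.count_take_add_count_drop ε Step.E
    have := List.count_pos_iff.2 hw
    omega
  intro i hi h₁ h₂
  simp only [List.take_append, List.count_append]
  rcases le_or_gt i σ₁.length with hi₁ | hi₁
  · simpa [Nat.sub_eq_zero_of_le hi₁, Nat.sub_eq_zero_of_le (hi₁.trans (hlen ▸ le_self_add))]
      using hσ i hi hi₁ (by omega)
  have hw_take : (w.take (i - σ₁.length)).count Step.E ≤ w.count Step.E :=
    (List.take_sublist _ _).count_le _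
  rw [List.take_of_length_le hi₁.le]
  rcases le_or_gt i σ₂.length with hi₂ | hi₂
  · have htail := σ₂.count_take_add_count_drop i Step.E
    rw [hgood.count_E_drop_eq_zero (by omega)] at htail
    have hw_take_ε : (w.take (i - σ₁.length)).count Step.E ≤ (w.take ε).count Step.E :=
      (List.take_sublist_take_left (by omega)).count_le _
    simp only [Nat.sub_eq_zero_of_le hi₂, List.take_zero, List.count_nil]
    omega
  · obtain ⟨m, hm⟩ : ∃ m, i - σ₂.length = m + 1 := ⟨i - σ₂.length - 1, by omega⟩
    rw [List.take_of_length_le hi₂.le, hm]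
    simp only [bottomBlock, List.take_succ_cons, List.count_cons_self]
    omega

/-- The set `V_w` of the statement. -/
def pathPairsEndingWith (k n ε : ℕ) (w : List Step) : Set (List Step × List Step) :=
  {p ∈ PathPairs k n ε 1 | w <:+ p.1 ∧ bottomBlock k <:+ p.2}

theorem pathPairsEndingWith_eq_image {k n ε : ℕ} {w : List Step} (hn : 1 ≤ n)
    (hε : ε ≤ k - 1) (hw : w.length = k - 1) (hwε : Step.E ∈ w.drop ε) :
    pathPairsEndingWith k (n + 1) ε w =
      Prod.map (· ++ w) (· ++ bottomBlock k) '' PathPairs k n ε (w.count Step.E) := by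
  have hεw : ε < k - 1 := by
    by_contra h
    simp [List.drop_eq_nil_of_le (hw ▸ not_lt.1 h : w.length ≤ ε)] at hwε
  have hk : 2 ≤ k := by omega
  have hmul : (k - 1) * (n + 1) = (k - 1) * n + (k - 1) := by ring
  have hpos : k - 1 ≤ (k - 1) * n := Nat.le_mul_of_pos_right _ hn
  ext ⟨γ₁, γ₂⟩
  constructor
  · rintro ⟨⟨hl₁, hh₁, hl₂, hh₂, hmeet, hδ, hgood⟩, ⟨σ₁, rfl⟩, ⟨σ₂, rfl⟩⟩
    simp only [List.length_append, hw, length_bottomBlock hk] at hl₁ hl₂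
    have hσ₁ : σ₁ ≠ [] := List.ne_nil_of_length_pos (by omega)
    have hσ₂ : σ₂ ≠ [] := List.ne_nil_of_length_pos (by omega)
    refine ⟨(σ₁, σ₂), ⟨(by omega : σ₁.length = _), ?_, (by omega : σ₂.length = _), ?_,
      fun q hq => hmeet q ⟨?_, ?_⟩, ?_, kGoodBottom_append_bottomBlock_iff.1 hgood⟩, rfl⟩
    · simpa [List.head?_append_of_ne_nil _ hσ₁] using hh₁
    · simpa [List.head?_append_of_ne_nil _ hσ₂] using hh₂
    · exact vertices_subset_of_prefix (List.prefix_append _ _) hq.1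
    · exact vertices_subset_of_prefix (List.prefix_append _ _) hq.2
    · simp only [endpoint, List.count_append, count_E_bottomBlock] at hδ ⊢
      push_cast at hδ
      omega
  · rintro ⟨⟨σ₁, σ₂⟩, ⟨hl₁, hh₁, hl₂, hh₂, hmeet, hδ, hgood⟩, h⟩
    obtain ⟨rfl, rfl⟩ := Prod.mk.inj h
    dsimp only at hl₁ hh₁ hl₂ hh₂ hmeet hgood
    simp only [endpoint] at hδ
    refine ⟨⟨?_, ?_, ?_, ?_,
      vertices_meet_only_at_origin_append hmeet hgood (by omega) hε (by omega) hwε, ?_,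
      kGoodBottom_append_bottomBlock_iff.2 hgood⟩, List.suffix_append _ _, List.suffix_append _ _⟩
    · simp only [List.length_append, hl₁, hw]; omega
    · simp [hh₁]
    · simp only [List.length_append, hl₂, length_bottomBlock hk]; omega
    · simp [hh₂]
    · simp only [endpoint, List.count_append, count_E_bottomBlock]
      push_cast
      omega

theorem pathPairsEndingWith_eq_empty {k n ε : ℕ} {w : List Step} (hk : 2 ≤ k) (hn : 1 ≤ n)
    (hε : ε ≤ k - 1) (hw : w.length = k - 1) (hwε : Step.E ∉ w.drop ε) :
    pathPairsEndingWith k (n + 1) ε w = ∅ := by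
  have hmul : (k - 1) * (n + 1) = (k - 1) * n + (k - 1) := by ring
  have hpos : 0 < (k - 1) * n := Nat.mul_pos (by omega) hn
  refine Set.eq_empty_of_forall_notMem ?_
  rintro ⟨γ₁, γ₂⟩ ⟨⟨hl₁, -, hl₂, -, hmeet, hδ, -⟩, ⟨σ₁, rfl⟩, ⟨σ₂, rfl⟩⟩
  simp only [List.length_append, hw, length_bottomBlock hk] at hl₁ hl₂
  refine vertices_meet_only_at_origin_iff.1 hmeet σ₂.length (by omega) (by simp; omega) (by simp) ?_
  have hwtake : (w.take ε).count Step.E = w.count Step.E := by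
    have := w.count_take_add_count_drop ε Step.E
    rw [List.count_eq_zero.2 hwε] at this
    omega
  simp only [List.take_append, List.take_of_length_le (by omega : σ₁.length ≤ σ₂.length),
    List.take_length, Nat.sub_self, List.take_zero, List.append_nil, List.count_append,
    show σ₂.length - σ₁.length = ε by omega, hwtake]
  simp only [endpoint, List.count_append, count_E_bottomBlock] at hδ
  push_cast at hδ
  omega

theorem ncard_pathPairsEndingWith {k n ε : ℕ} {w : List Step} (hk : 2 ≤ k) (hn : 1 ≤ n)
    (hε : ε ≤ k - 1) (hw : w.length = k - 1) :
    (pathPairsEndingWith k (n + 1) ε w).ncard =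
      if Step.E ∈ w.drop ε then (PathPairs k n ε (w.count Step.E)).ncard else 0 := by
  split_ifs with hwε
  · rw [pathPairsEndingWith_eq_image hn hε hw hwε, Set.ncard_image_of_injective _
      ((List.append_left_injective _).prodMap (List.append_left_injective _))]
  · rw [pathPairsEndingWith_eq_empty hk hn hε hw hwε, Set.ncard_empty]

theorem List.count_ofFn {α : Type*} [DecidableEq α] {m : ℕ} (f : Fin m → α) (a : α) :
    (List.ofFn f).count a = (Finset.univ.filter fun i => f i = a).card := by
  rw [← Multiset.coe_count, ← Fin.univ_val_map, Multiset.count_map]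
  simp only [Finset.card, Finset.filter_val, eq_comm]

theorem List.mem_drop_ofFn_iff {α : Type*} {m : ℕ} (f : Fin m → α) (ε : ℕ) (a : α) :
    a ∈ (List.ofFn f).drop ε ↔ ∃ i : Fin m, ε ≤ i ∧ f i = a := by
  rw [List.mem_drop_iff_getElem]
  constructor
  · rintro ⟨t, ht, rfl⟩
    exact ⟨⟨ε + t, by rw [List.length_ofFn] at ht; omega⟩, by simp, by simp⟩
  · rintro ⟨i, hi, rfl⟩
    exact ⟨i - ε, by rw [List.length_ofFn]; omega, by simp [Nat.add_sub_cancel' hi]⟩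

open Finset in
theorem card_words_count_E_eq_not_mem_drop (m ε j : ℕ) :
    #{f : Fin m → Step | (List.ofFn f).count Step.E = j ∧ Step.E ∉ (List.ofFn f).drop ε} =
      (min m ε).choose j := by
  rw [← Fin.card_filter_val_lt, ← card_powersetCard]
  have hpositions : ∀ S : Finset (Fin m),
      ({i | (if i ∈ S then Step.E else Step.N) = Step.E} : Finset (Fin m)) = S := fun S => by
    ext i
    by_cases h : i ∈ S <;> simp [h]
  refine card_nbij' (fun f => ({i | f i = Step.E} : Finset (Fin m)))
    (fun S i => if i ∈ S then Step.E else Step.N)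
    (fun f hf => ?_) (fun S hS => ?_) (fun f _ => ?_) (fun S _ => ?_)
  · simp only [coe_filter, mem_univ, true_and, Set.mem_ofPred_eq, List.count_ofFn,
      List.mem_drop_ofFn_iff, not_exists, not_and] at hf
    refine mem_coe.2 (mem_powersetCard.2 ⟨fun i hi => ?_, hf.1⟩)
    simp only [mem_filter, mem_univ, true_and] at hi ⊢
    exact not_le.1 fun h => hf.2 i h hi
  · simp only [mem_coe, mem_powersetCard] at hS
    simp only [coe_filter, mem_univ, true_and, Set.mem_ofPred_eq, List.count_ofFn,
      List.mem_drop_ofFn_iff, not_exists, not_and]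
    rw [hpositions]
    refine ⟨hS.2, fun i hi h => ?_⟩
    have hiS : i ∈ S := hpositions S ▸ mem_filter.2 ⟨mem_univ i, h⟩
    have := hS.1 hiS
    simp only [mem_filter, mem_univ, true_and] at this
    omega
  · funext i
    cases h : f i <;> simp [h]
  · exact hpositions S

open Finset in
theorem card_words_count_E_eq_mem_drop {m ε : ℕ} (j : ℕ) (hε : ε ≤ m) :
    (#{f : Fin m → Step | (List.ofFn f).count Step.E = j ∧ Step.E ∈ (List.ofFn f).drop ε} : ℤ) =
      m.choose j - ε.choose j := by
  have hall := card_words_count_E_eq_not_mem_drop m m j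
  have hbad := card_words_count_E_eq_not_mem_drop m ε j
  have hsplit := card_filter_add_card_filter_not
    (s := {f : Fin m → Step | (List.ofFn f).count Step.E = j})
    (fun f => Step.E ∈ (List.ofFn f).drop ε)
  simp only [filter_filter] at hsplit
  simp only [min_self, List.drop_of_length_le List.length_ofFn.le, List.not_mem_nil,
    not_false_eq_true, and_true] at hall
  rw [min_eq_right hε] at hbad
  omega

theorem kPathPair_Vw_sum_general (k n ε j : ℕ) (hk : 2 ≤ k) (hn : 2 ≤ n)
    (hε : ε ≤ k - 1) :
    (∑ f ∈ Finset.univ.filter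
        (fun f : Fin (k - 1) → Step => (List.ofFn f).count Step.E = j),
      ({p ∈ PathPairs k n ε 1 |
          (List.ofFn f) <:+ p.1 ∧
            (Step.E :: List.replicate (k - 2) Step.N) <:+ p.2}.ncard : ℤ))
      = (((k - 1).choose j : ℤ) - (ε.choose j : ℤ))
          * (PathPairs k (n - 1) ε j).ncard := by
  obtain ⟨n, rfl⟩ : ∃ m, n = m + 1 := ⟨n - 1, by omega⟩
  have hterm : ∀ f ∈ Finset.univ.filter
      (fun f : Fin (k - 1) → Step => (List.ofFn f).count Step.E = j),
      ((pathPairsEndingWith k (n + 1) ε (List.ofFn f)).ncard : ℤ) =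
        if Step.E ∈ (List.ofFn f).drop ε then ((PathPairs k n ε j).ncard : ℤ) else 0 := by
    intro f hf
    rw [ncard_pathPairsEndingWith hk (by omega) hε List.length_ofFn, (Finset.mem_filter.1 hf).2,
      Nat.cast_ite, Nat.cast_zero]
  refine (Finset.sum_congr rfl hterm).trans ?_
  rw [Finset.sum_ite, Finset.sum_const_zero, add_zero, Finset.sum_const, nsmul_eq_mul,
    Finset.filter_filter, card_words_count_E_eq_mem_drop j hε, Nat.add_sub_cancel]

/-- From the proof of Theorem 2.1: for `δ = 1`, the total size of the sets `V_w`
over words `w` of length `k-1` with exactly `j` instances of `E` equals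
`(C(k-1,j) - C(ε,j)) |𝒫^{k,ε}_{n-1,j}|`. -/
theorem kPathPair_Vw_sum (k n ε j : ℕ) (hk : 2 ≤ k) (hn : 2 ≤ n)
    (hε : ε ≤ k - 1) (hj : j ≤ k - 1) :
    (∑ f ∈ Finset.univ.filter
        (fun f : Fin (k - 1) → Step => (List.ofFn f).count Step.E = j),
      ({p ∈ PathPairs k n ε 1 |
          (List.ofFn f) <:+ p.1 ∧
            (Step.E :: List.replicate (k - 2) Step.N) <:+ p.2}.ncard : ℤ))
      = (((k - 1).choose j : ℤ) - (ε.choose j : ℤ))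
          * (PathPairs k (n - 1) ε j).ncard :=
  kPathPair_Vw_sum_general k n ε j hk hn hε
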